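/- Let P be a finite set of points in ℝ^d, |P| = n, with d ≥ 1. Suppose e1, ..., ed are the standard basis directions, and for each i < d we remove all points of P lying on lines in direction ei that contain more than n^(1/d) points of the (current) set, iteratively. Then after processing directions e1, ..., e_{d-1}, every line in direction ed contains at most n^(1/d) points of the remaining set. -/
import Mathlib


/-- Iteratively, for directions `e_1, ..., e_{d-1}`, delete all points lying on short
lines in that direction (lines containing at most `n^(1/d)` points of the current set,
i.e. keep only points on long lines). Then in the remaining set every line in the last
coordinate direction `e_d` contains at most `n^(1/d)` points. -/
theorem last_direction_lines_short_after_iterative_deletion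
    (d n : ℕ) (hd : 1 ≤ d) (P : Finset (Fin d → ℝ)) (hP : P.card = n)
    (R : ℕ → Finset (Fin d → ℝ)) (hR0 : R 0 = P)
    (hstep : ∀ i : ℕ, ∀ hi : i < d - 1,
      R (i + 1) = (R i).filter (fun p =>
        (n : ℝ) ^ ((1 : ℝ) / d) <
          (((R i).filter
            (fun q => ∀ j : Fin d, j ≠ ⟨i, by omega⟩ → q j = p j)).card : ℝ))) :
    ∀ p ∈ R (d - 1),
      ((((R (d - 1)).filter
          (fun q => ∀ j : Fin d, (j : ℕ) ≠ d - 1 → q j = p j)).card : ℝ))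
        ≤ (n : ℝ) ^ ((1 : ℝ) / d) := by
  intro p hp
  by_contra hlong
  push_neg at hlong
  set c : ℝ := (n : ℝ) ^ ((1 : ℝ) / d) with hc
  have hc0 : 0 ≤ c := Real.rpow_nonneg (Nat.cast_nonneg n) _
  have key : ∀ m : ℕ, m ≤ d - 1 → ∃ A : Finset (Fin d → ℝ),
      A ⊆ R (d - 1 - m) ∧
      (∀ q ∈ A, ∀ j : Fin d, (j : ℕ) < d - 1 - m → q j = p j) ∧
      c ^ (m + 1) < (A.card : ℝ) := by
    intro m
    induction m with
    | zero =>
      intro _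
      refine ⟨(R (d-1)).filter (fun q => ∀ j : Fin d, (j : ℕ) ≠ d - 1 → q j = p j),
        ?_, ?_, ?_⟩
      · simp only [Nat.sub_zero]
        exact Finset.filter_subset _ _
      · intro q hq j hj
        exact (Finset.mem_filter.mp hq).2 j (by omega)
      · simpa using hlong
    | succ m ih =>
      intro hm
      obtain ⟨A, hAR, hAp, hAc⟩ := ih (by omega)
      set k := d - 1 - (m + 1) with hk
      have hkd : k < d - 1 := by omega
      have hk1 : k + 1 = d - 1 - m := by omega
      have hkd' : k < d := by omega
      have hAne : A.Nonempty := by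
        rw [← Finset.card_pos]
        exact_mod_cast lt_of_le_of_lt (pow_nonneg hc0 _) hAc
      set line : (Fin d → ℝ) → Finset (Fin d → ℝ) :=
        fun q => (R k).filter (fun r => ∀ j : Fin d, j ≠ ⟨k, hkd'⟩ → r j = q j)
        with hline
      -- each point of A lies in R (k+1), so its e_k-line is long
      have hlongline : ∀ q ∈ A, c < ((line q).card : ℝ) := by
        intro q hq
        have hq' : q ∈ R (k + 1) := by rw [hk1]; exact hAR hq
        rw [hstep k hkd] at hq'
        exact (Finset.mem_filter.mp hq').2
      -- lines through distinct points of A are disjoint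
      have hdisj : ∀ x ∈ A, ∀ y ∈ A, x ≠ y → Disjoint (line x) (line y) := by
        intro x hx y hy hxy
        rw [Finset.disjoint_left]
        intro r hrx hry
        apply hxy
        funext j
        by_cases hj : j = ⟨k, hkd'⟩
        · subst hj
          have h1 := hAp x hx ⟨k, hkd'⟩ (by simpa using by omega)
          have h2 := hAp y hy ⟨k, hkd'⟩ (by simpa using by omega)
          rw [h1, h2]
        · rw [← (Finset.mem_filter.mp hrx).2 j hj, (Finset.mem_filter.mp hry).2 j hj]
      refine ⟨A.biUnion line, ?_, ?_, ?_⟩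
      · intro r hr
        obtain ⟨q, hq, hrq⟩ := Finset.mem_biUnion.mp hr
        exact (Finset.mem_filter.mp hrq).1
      · intro r hr j hj
        obtain ⟨q, hq, hrq⟩ := Finset.mem_biUnion.mp hr
        have hjk : j ≠ ⟨k, hkd'⟩ := by
          intro h
          rw [h] at hj
          simp at hj
        rw [(Finset.mem_filter.mp hrq).2 j hjk]
        exact hAp q hq j (by omega)
      · have hcard : (A.biUnion line).card = ∑ q ∈ A, (line q).card :=
          Finset.card_biUnion hdisj
        have hsum : (A.card : ℝ) * c < ∑ q ∈ A, ((line q).card : ℝ) := by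
          calc (A.card : ℝ) * c = ∑ _q ∈ A, c := by
                rw [Finset.sum_const, nsmul_eq_mul]
            _ < ∑ q ∈ A, ((line q).card : ℝ) :=
                Finset.sum_lt_sum_of_nonempty hAne hlongline
        have h1 : c ^ (m + 1 + 1) ≤ (A.card : ℝ) * c := by
          rw [pow_succ]
          exact mul_le_mul_of_nonneg_right (le_of_lt hAc) hc0
        calc c ^ (m + 1 + 1) ≤ (A.card : ℝ) * c := h1
          _ < ∑ q ∈ A, ((line q).card : ℝ) := hsum
          _ = ((A.biUnion line).card : ℝ) := by rw [hcard]; push_cast; ring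
  obtain ⟨A, hAR, _, hAc⟩ := key (d - 1) le_rfl
  have hA0 : A ⊆ P := by
    rw [← hR0]
    simpa using hAR
  have hcd : c ^ (d - 1 + 1) = (n : ℝ) := by
    have hd1 : d - 1 + 1 = d := by omega
    rw [hd1, hc, one_div, Real.rpow_inv_natCast_pow (Nat.cast_nonneg n) (by omega)]
  have : (n : ℝ) < (A.card : ℝ) := by rw [← hcd]; exact hAc
  have hle : A.card ≤ n := hP ▸ Finset.card_le_card hA0
  exact absurd this (by exact_mod_cast not_lt.mpr hle)
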